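/- arXiv:2507.16625 — 2 statements merged into one kernel-verified Lean document; each statement's English description precedes it below -/
import Mathlib

section
/- Let G be a connected graph and let (T, 𝒳) be a tree-cut decomposition of G of finite adhesion whose parts are precisely the ω-edge blocks of G and such that for every edge t₁t₂ of T there is an edge of G between X_{t₁} and X_{t₂}. Then for every region C of G there exist finitely many pairwise disjoint regions C'_1, …, C'_n of T such that the vertex set of C equals ⋃_{i=1}^{n} ⋃_{t ∈ C'_i} X_t. -/
/-- The set of edges of `G` with one endpoint in `A` and the other in `B`. -/
def edgesBetween {V : Type*} (G : SimpleGraph V) (A B : Set V) : Set (Sym2 V) :=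
  {e | e ∈ G.edgeSet ∧ ∃ x ∈ A, ∃ y ∈ B, e = s(x, y)}

/-- `x ~ y` iff no finite set of edges of `G` separates `x` from `y`. -/
def OmegaEquiv {V : Type*} (G : SimpleGraph V) (x y : V) : Prop :=
  ∀ F : Set (Sym2 V), F.Finite → (G.deleteEdges F).Reachable x y

/-- The ω-edge blocks of `G` are the equivalence classes of `OmegaEquiv`. -/
def IsOmegaEdgeBlock {V : Type*} (G : SimpleGraph V) (B : Set V) : Prop :=
  ∃ x, B = {y | OmegaEquiv G x y}

/-- Given a tree-cut decomposition `(T, X)` and an edge `t₁t₂` of `T`, the union of the parts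
indexed by the component of `T - t₁t₂` containing `t₁`. -/
def side {τ V : Type*} (T : SimpleGraph τ) (X : τ → Set V) (t₁ t₂ : τ) : Set V :=
  ⋃ t ∈ {u | (T.deleteEdges {s(t₁, t₂)}).Reachable t₁ u}, X t

/-- A region of `G` is (the vertex set of) a connected subgraph with finite edge boundary. -/
def IsRegion {V : Type*} (G : SimpleGraph V) (C : Set V) : Prop :=
  (G.induce C).Connected ∧ (edgesBetween G C Cᶜ).Finite

/-!
An ω-edge block never straddles a finite edge cut, so the region `C` is the union of the parts
`X t` over a set `S` of nodes. Since the parts of adjacent nodes are joined by an edge of `G`, every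
edge of `T` leaving `S` is the image of an edge of `G` leaving `C`, so `S` has finite edge boundary
in `T`. Deleting that boundary from the tree leaves finitely many components, because each one
other than the whole tree contains an end of a deleted edge; those inside `S` are the regions
sought.
-/

open SimpleGraph

section OmegaBlocks

variable {V τ : Type*} {G : SimpleGraph V}

lemma equivalence_omegaEquiv (G : SimpleGraph V) : Equivalence (OmegaEquiv G) where
  refl x _ _ := Reachable.refl x
  symm h F hF := (h F hF).symm
  trans h h' F hF := (h F hF).trans (h' F hF)

lemma IsOmegaEdgeBlock.eq_setOf_omegaEquiv {B : Set V} (hB : IsOmegaEdgeBlock G B) {x : V}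
    (hx : x ∈ B) : B = {y | OmegaEquiv G x y} := by
  obtain ⟨a, rfl⟩ := hB
  have hax : OmegaEquiv G a x := hx
  ext y
  exact ⟨(equivalence_omegaEquiv G).trans ((equivalence_omegaEquiv G).symm hax),
    (equivalence_omegaEquiv G).trans hax⟩

lemma IsOmegaEdgeBlock.omegaEquiv {B : Set V} (hB : IsOmegaEdgeBlock G B) {x y : V}
    (hx : x ∈ B) (hy : y ∈ B) : OmegaEquiv G x y := by
  rw [hB.eq_setOf_omegaEquiv hx] at hy
  exact hy

lemma exists_eq_preimage_singleton_of_isOmegaEdgeBlock {X : τ → Set V}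
    (hblocks : ∀ t, IsOmegaEdgeBlock G (X t)) (hinj : Function.Injective X)
    (hsurj : ∀ B : Set V, IsOmegaEdgeBlock G B → ∃ t, X t = B) :
    ∃ π : V → τ, X = fun t => π ⁻¹' {t} := by
  choose π hπ using fun x => hsurj {y | OmegaEquiv G x y} ⟨x, rfl⟩
  refine ⟨π, funext fun t => Set.ext fun x => ⟨fun hx => ?_, fun hx => ?_⟩⟩
  · exact hinj ((hπ x).trans ((hblocks t).eq_setOf_omegaEquiv hx).symm)
  · rw [← (Set.mem_singleton_iff.mp hx), hπ]
    exact (equivalence_omegaEquiv G).refl x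

end OmegaBlocks

section EdgeBoundary

variable {V τ : Type*} {G : SimpleGraph V}

lemma mem_of_reachable_deleteEdges_edgesBetween {A : Set V} {x y : V}
    (h : (G.deleteEdges (edgesBetween G A Aᶜ)).Reachable x y) (hx : x ∈ A) : y ∈ A := by
  by_contra hy
  obtain ⟨p⟩ := h
  obtain ⟨d, -, hd₁, hd₂⟩ := p.exists_boundary_dart A hx hy
  have hd := d.adj
  rw [deleteEdges_adj] at hd
  exact hd.2 ⟨hd.1, _, hd₁, _, hd₂, rfl⟩

lemma OmegaEquiv.mem_of_mem {C : Set V} (hC : (edgesBetween G C Cᶜ).Finite) {x y : V}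
    (hxy : OmegaEquiv G x y) (hx : x ∈ C) : y ∈ C :=
  mem_of_reachable_deleteEdges_edgesBetween (hxy _ hC) hx

lemma finite_edgesBetween_of_finite_preimage {T : SimpleGraph τ} {π : V → τ}
    (hedge : ∀ t₁ t₂, T.Adj t₁ t₂ → ∃ x ∈ π ⁻¹' {t₁}, ∃ y ∈ π ⁻¹' {t₂}, G.Adj x y)
    {S : Set τ} (hS : (edgesBetween G (π ⁻¹' S) (π ⁻¹' S)ᶜ).Finite) :
    (edgesBetween T S Sᶜ).Finite := by
  refine (hS.image (Sym2.map π)).subset ?_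
  rintro _ ⟨he, t₁, ht₁, t₂, ht₂, rfl⟩
  obtain ⟨x, rfl, y, rfl, hxy⟩ := hedge t₁ t₂ he
  exact ⟨s(x, y), ⟨hxy, x, ht₁, y, ht₂, rfl⟩, rfl⟩

end EdgeBoundary

namespace SimpleGraph

variable {τ : Type*} {T : SimpleGraph τ} {D : Set (Sym2 τ)}

lemma ConnectedComponent.edgesBetween_supp_subset (c : (T.deleteEdges D).ConnectedComponent) :
    edgesBetween T c.supp c.suppᶜ ⊆ D := by
  rintro _ ⟨he, a, ha, b, hb, rfl⟩
  by_contra hD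
  exact hb (c.mem_supp_of_adj_mem_supp ha (deleteEdges_adj.mpr ⟨he, hD⟩))

lemma ConnectedComponent.isRegion_supp (hD : D.Finite) (c : (T.deleteEdges D).ConnectedComponent) :
    IsRegion T c.supp :=
  ⟨c.connected_toSimpleGraph.mono (comap_monotone _ (T.deleteEdges_le D)),
    hD.subset c.edgesBetween_supp_subset⟩

lemma ConnectedComponent.supp_subset_of_mem {S : Set τ}
    (c : (T.deleteEdges (edgesBetween T S Sᶜ)).ConnectedComponent) {x : τ} (hxc : x ∈ c.supp)
    (hxS : x ∈ S) : c.supp ⊆ S := fun _ hy =>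
  mem_of_reachable_deleteEdges_edgesBetween (c.reachable_of_mem_supp hxc hy) hxS

lemma finite_connectedComponent_deleteEdges (hT : T.Preconnected) (hD : D.Finite) :
    Finite (T.deleteEdges D).ConnectedComponent := by
  classical
  set W : Set τ := ⋃ e ∈ D, (e.toFinset : Set τ)
  have hW : W.Finite := hD.biUnion fun e _ => e.toFinset.finite_toSet
  have hcover : ∀ c : (T.deleteEdges D).ConnectedComponent,
      c.supp = Set.univ ∨ c ∈ (T.deleteEdges D).connectedComponentMk '' W := by
    intro c
    refine or_iff_not_imp_left.mpr fun hc => ?_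
    obtain ⟨u, hu⟩ := (Set.ne_univ_iff_exists_notMem _).mp hc
    obtain ⟨p⟩ := hT c.out u
    obtain ⟨d, -, hd₁, hd₂⟩ := p.exists_boundary_dart c.supp c.out_eq hu
    have hdD : d.edge ∈ D := c.edgesBetween_supp_subset ⟨d.adj, _, hd₁, _, hd₂, rfl⟩
    exact ⟨d.fst, Set.mem_biUnion hdD (by simp [Dart.edge]), hd₁⟩
  have huniv : {c : (T.deleteEdges D).ConnectedComponent | c.supp = Set.univ}.Subsingleton :=
    fun c hc c' hc' => ConnectedComponent.supp_inj.mp (hc.trans hc'.symm)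
  exact Set.finite_univ_iff.mp ((huniv.finite.union (hW.image _)).subset fun c _ => hcover c)

lemma exists_fin_regions_of_finite_edgesBetween (hT : T.Preconnected) {S : Set τ}
    (hS : (edgesBetween T S Sᶜ).Finite) :
    ∃ (n : ℕ) (C' : Fin n → Set τ), (∀ i, IsRegion T (C' i)) ∧
      (∀ i j, i ≠ j → Disjoint (C' i) (C' j)) ∧ S = ⋃ i, C' i := by
  set H := T.deleteEdges (edgesBetween T S Sᶜ)
  have := finite_connectedComponent_deleteEdges hT hS
  obtain ⟨n, ⟨e⟩⟩ := Finite.exists_equiv_fin {c : H.ConnectedComponent // c.supp ⊆ S}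
  refine ⟨n, fun i => (e.symm i).1.supp, fun i => (e.symm i).1.isRegion_supp hS,
    fun i j hij => H.pairwise_disjoint_supp_connectedComponent ?_, ?_⟩
  · exact fun h => hij (e.symm.injective (Subtype.ext h))
  · refine subset_antisymm (fun x hx => ?_) (Set.iUnion_subset fun i => (e.symm i).2)
    set c := H.connectedComponentMk x
    refine Set.mem_iUnion.mpr ⟨e ⟨c, c.supp_subset_of_mem rfl hx⟩, ?_⟩
    simp [c]

end SimpleGraph

theorem region_decomposes_into_tree_regions_general {V τ : Type*} (G : SimpleGraph V)
    (T : SimpleGraph τ) (hT : T.IsTree) (X : τ → Set V)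
    (hblocks : ∀ t, IsOmegaEdgeBlock G (X t))
    (hinj : Function.Injective X)
    (hsurj : ∀ B : Set V, IsOmegaEdgeBlock G B → ∃ t, X t = B)
    (hedge : ∀ t₁ t₂, T.Adj t₁ t₂ → ∃ x ∈ X t₁, ∃ y ∈ X t₂, G.Adj x y)
    (C : Set V) (hC : IsRegion G C) :
    ∃ (n : ℕ) (C' : Fin n → Set τ),
      (∀ i, IsRegion T (C' i)) ∧
      (∀ i j, i ≠ j → Disjoint (C' i) (C' j)) ∧
      C = ⋃ i, ⋃ t ∈ C' i, X t := by
  obtain ⟨π, rfl⟩ := exists_eq_preimage_singleton_of_isOmegaEdgeBlock hblocks hinj hsurj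
  have hC_eq : π ⁻¹' (π '' C) = C := by
    refine subset_antisymm ?_ (Set.subset_preimage_image π C)
    rintro x ⟨y, hy, hyx⟩
    exact ((hblocks (π x)).omegaEquiv hyx rfl).mem_of_mem hC.2 hy
  obtain ⟨n, C', hregions, hdisjoint, hunion⟩ :=
    exists_fin_regions_of_finite_edgesBetween hT.connected.preconnected
      (finite_edgesBetween_of_finite_preimage hedge (hC_eq.symm ▸ hC.2))
  refine ⟨n, C', hregions, hdisjoint, ?_⟩
  rw [← hC_eq, hunion, Set.preimage_iUnion]
  exact Set.iUnion_congr fun i => (Set.biUnion_preimage_singleton π (C' i)).symm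

/-- For a tree-cut decomposition of finite adhesion into the ω-edge blocks, with adjacent
parts joined by edges, every region of `G` is the union of the parts over finitely many
pairwise disjoint regions of the decomposition tree. -/
theorem region_decomposes_into_tree_regions {V τ : Type*} (G : SimpleGraph V)
    (hG : G.Connected)
    (T : SimpleGraph τ) (hT : T.IsTree) (X : τ → Set V)
    (hblocks : ∀ t, IsOmegaEdgeBlock G (X t))
    (hinj : Function.Injective X)
    (hsurj : ∀ B : Set V, IsOmegaEdgeBlock G B → ∃ t, X t = B)
    (hadhesion : ∀ t₁ t₂, T.Adj t₁ t₂ →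
      (edgesBetween G (side T X t₁ t₂) (side T X t₂ t₁)).Finite)
    (hedge : ∀ t₁ t₂, T.Adj t₁ t₂ → ∃ x ∈ X t₁, ∃ y ∈ X t₂, G.Adj x y)
    (C : Set V) (hC : IsRegion G C) :
    ∃ (n : ℕ) (C' : Fin n → Set τ),
      (∀ i, IsRegion T (C' i)) ∧
      (∀ i j, i ≠ j → Disjoint (C' i) (C' j)) ∧
      C = ⋃ i, ⋃ t ∈ C' i, X t :=
  region_decomposes_into_tree_regions_general G T hT X hblocks hinj hsurj hedge C hC
end

section
/- Let G be a connected graph and let (T, 𝒳) be a tree-cut decomposition of G of finite adhesion whose parts are precisely the ω-edge blocks of G and such that for every edge t₁t₂ of T there is an edge of G between X_{t₁} and X_{t₂}. If R and R' are rays in G that are not edge-equivalent, then there is an edge e = t₁t₂ of T, with components T₁ ∋ t₁ and T₂ ∋ t₂ of T − e, such that some tail of R is contained in ⋃_{t ∈ T₁} X_t and some tail of R' is contained in ⋃_{t ∈ T₂} X_t; in particular, the finite adhesion set X_e separates a tail of R from a tail of R' in G. -/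
/-- A ray in `G` is an injective one-way infinite path. -/
def IsRay {V : Type*} (G : SimpleGraph V) (f : ℕ → V) : Prop :=
  Function.Injective f ∧ ∀ n, G.Adj (f n) (f (n + 1))

/-- Two rays are edge-equivalent if for every finite edge set `F` they have tails lying in
the same component of `G - F`. -/
def EdgeEquivRays {V : Type*} (G : SimpleGraph V) (R R' : ℕ → V) : Prop :=
  ∀ F : Set (Sym2 V), F.Finite → ∃ m n, ∀ i ≥ m, ∀ j ≥ n,
    (G.deleteEdges F).Reachable (R i) (R' j)

open SimpleGraph

section Aux
variable {V τ : Type*} {G : SimpleGraph V} {T : SimpleGraph τ} {X : τ → Set V}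

lemma omegaEquiv_refl (x : V) : OmegaEquiv G x x := fun _ _ => Reachable.refl x

lemma omegaEquiv_symm {x y : V} (h : OmegaEquiv G x y) : OmegaEquiv G y x :=
  fun F hF => (h F hF).symm

lemma omegaEquiv_trans {x y z : V} (h : OmegaEquiv G x y) (h' : OmegaEquiv G y z) :
    OmegaEquiv G x z := fun F hF => (h F hF).trans (h' F hF)

lemma classEq {x y : V} (h : OmegaEquiv G x y) :
    {z | OmegaEquiv G x z} = {z | OmegaEquiv G y z} := by
  ext z
  exact ⟨fun hz => omegaEquiv_trans (omegaEquiv_symm h) hz, fun hz => omegaEquiv_trans h hz⟩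

/-- In a connected graph, after deleting one edge, every vertex is reachable from one of
its endpoints. -/
lemma reach_or_aux {a b : τ} : ∀ {x u : τ} (_ : T.Walk x u),
    ((T.deleteEdges {s(a, b)}).Reachable a x ∨ (T.deleteEdges {s(a, b)}).Reachable b x) →
    ((T.deleteEdges {s(a, b)}).Reachable a u ∨ (T.deleteEdges {s(a, b)}).Reachable b u) := by
  intro x u w
  induction w with
  | nil => exact id
  | @cons x c u h p ih =>
      intro hx
      apply ih
      by_cases he : s(x, c) = s(a, b)
      · rcases Sym2.eq_iff.mp he with ⟨rfl, rfl⟩ | ⟨rfl, rfl⟩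
        · exact Or.inr (Reachable.refl _)
        · exact Or.inl (Reachable.refl _)
      · have hadj : (T.deleteEdges {s(a, b)}).Adj x c := by
          rw [deleteEdges_adj]
          exact ⟨h, by simpa using he⟩
        rcases hx with h' | h'
        · exact Or.inl (h'.trans hadj.reachable)
        · exact Or.inr (h'.trans hadj.reachable)

lemma reach_or (hc : T.Connected) (a b u : τ) :
    (T.deleteEdges {s(a, b)}).Reachable a u ∨ (T.deleteEdges {s(a, b)}).Reachable b u := by
  obtain ⟨w⟩ := hc a u
  exact reach_or_aux w (Or.inl (Reachable.refl a))

lemma bridge_not_reach (hT : T.IsTree) {a b : τ} (hab : T.Adj a b) :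
    ¬ (T.deleteEdges {s(a, b)}).Reachable a b := by
  have hbr : T.IsBridge s(a, b) :=
    (isAcyclic_iff_forall_adj_isBridge.mp hT.IsAcyclic) hab
  exact isBridge_iff.mp hbr

lemma comp_disjoint (hT : T.IsTree) {a b u : τ} (hab : T.Adj a b)
    (ha : (T.deleteEdges {s(a, b)}).Reachable a u)
    (hb : (T.deleteEdges {s(a, b)}).Reachable b u) : False :=
  bridge_not_reach hT hab (ha.trans hb.symm)

lemma mem_side_of_mem {t b : τ} {v : V} (hv : v ∈ X t) : v ∈ side T X t b :=
  Set.mem_biUnion (Reachable.refl t) hv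

lemma mem_side_of_reach {a b t : τ} {v : V}
    (ht : (T.deleteEdges {s(a, b)}).Reachable a t) (hv : v ∈ X t) : v ∈ side T X a b :=
  Set.mem_biUnion ht hv

lemma mem_pi {π : V → τ} (hπ : ∀ v, X (π v) = {y | OmegaEquiv G v y}) (v : V) :
    v ∈ X (π v) := by rw [hπ]; exact omegaEquiv_refl v

lemma block_eq (hblocks : ∀ t, IsOmegaEdgeBlock G (X t)) (hinj : Function.Injective X)
    {π : V → τ} (hπ : ∀ v, X (π v) = {y | OmegaEquiv G v y}) {v : V} {t : τ}
    (h : v ∈ X t) : t = π v := by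
  obtain ⟨x₀, hx₀⟩ := hblocks t
  rw [hx₀] at h
  apply hinj
  rw [hx₀, hπ]
  exact classEq h

lemma side_elim (hblocks : ∀ t, IsOmegaEdgeBlock G (X t)) (hinj : Function.Injective X)
    {π : V → τ} (hπ : ∀ v, X (π v) = {y | OmegaEquiv G v y}) {a b : τ} {v : V}
    (h : v ∈ side T X a b) : (T.deleteEdges {s(a, b)}).Reachable a (π v) := by
  obtain ⟨t, ht, hv⟩ := Set.mem_iUnion₂.mp h
  rwa [block_eq hblocks hinj hπ hv] at ht

lemma side_compl (hT : T.IsTree) (hblocks : ∀ t, IsOmegaEdgeBlock G (X t))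
    (hinj : Function.Injective X)
    {π : V → τ} (hπ : ∀ v, X (π v) = {y | OmegaEquiv G v y}) {a b : τ} (hab : T.Adj a b) :
    side T X b a = (side T X a b)ᶜ := by
  ext v
  constructor
  · intro h h'
    have h1 := side_elim hblocks hinj hπ h'
    have h2 := side_elim hblocks hinj hπ h
    rw [Sym2.eq_swap (a := b) (b := a)] at h2
    exact comp_disjoint hT hab h1 h2
  · intro h
    rcases reach_or hT.isConnected a b (π v) with h' | h'
    · exact absurd (mem_side_of_reach h' (mem_pi hπ v)) h
    · apply mem_side_of_reach (b := a) _ (mem_pi hπ v)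
      rwa [Sym2.eq_swap (a := b) (b := a)]

/-- A ray eventually stays on one side of a finite edge cut. -/
lemma tail_side {S : Set V} (hfin : (edgesBetween G S Sᶜ).Finite) {R : ℕ → V}
    (hR : IsRay G R) :
    ∃ N, (∀ i ≥ N, R i ∈ S) ∨ (∀ i ≥ N, R i ∉ S) := by
  classical
  set K : Set ℕ := {n | ¬ (R n ∈ S ↔ R (n + 1) ∈ S)} with hK
  have hmap : ∀ n ∈ K, s(R n, R (n + 1)) ∈ edgesBetween G S Sᶜ := by
    intro n hn
    simp only [hK, Set.mem_setOf_eq, not_iff] at hn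
    refine ⟨(G.mem_edgeSet).mpr (hR.2 n), ?_⟩
    by_cases h1 : R n ∈ S
    · exact ⟨R n, h1, R (n + 1), fun hc => (hn.mpr hc) h1, rfl⟩
    · exact ⟨R (n + 1), hn.mp h1, R n, h1, Sym2.eq_swap⟩
  have hKfin : K.Finite := by
    apply Set.Finite.of_finite_image (f := fun n => s(R n, R (n + 1)))
      (hfin.subset (by rintro e ⟨n, hn, rfl⟩; exact hmap n hn))
    intro n _ m _ he
    rcases Sym2.eq_iff.mp he with ⟨h1, h2⟩ | ⟨h1, h2⟩
    · exact hR.1 h1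
    · have := hR.1 h1; have := hR.1 h2; omega
  obtain ⟨N, hN⟩ := hKfin.bddAbove
  have hstable : ∀ i ≥ N + 1, (R i ∈ S ↔ R (N + 1) ∈ S) := by
    intro i hi
    induction i, hi using Nat.le_induction with
    | base => exact Iff.rfl
    | succ k hk ih =>
        have hkK : k ∉ K := fun h => by have := hN h; omega
        simp only [hK, Set.mem_setOf_eq, not_not] at hkK
        exact (hkK.symm).trans ih
  by_cases h : R (N + 1) ∈ S
  · exact ⟨N + 1, Or.inl fun i hi => (hstable i hi).mpr h⟩
  · exact ⟨N + 1, Or.inr fun i hi hc => h ((hstable i hi).mp hc)⟩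

/-- No walk avoiding the edge cut can cross it. -/
lemma no_cross {S : Set V} : ∀ {u v : V} (_ : (G.deleteEdges (edgesBetween G S Sᶜ)).Walk u v),
    u ∈ S → v ∉ S → False := by
  intro u v w
  induction w with
  | nil => exact fun h h' => h' h
  | @cons x c u h p ih =>
      intro hx hu
      by_cases hc : c ∈ S
      · exact ih hc hu
      · rw [deleteEdges_adj] at h
        exact h.2 ⟨(G.mem_edgeSet).mpr h.1, x, hx, c, hc, rfl⟩

lemma no_cross_reachable {S : Set V} {u v : V} (hu : u ∈ S) (hv : v ∉ S) :
    ¬ (G.deleteEdges (edgesBetween G S Sᶜ)).Reachable u v := by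
  rintro ⟨w⟩; exact no_cross w hu hv

/-- Any walk between vertices on opposite sides of a deleted tree edge uses that edge. -/
lemma tree_cross (hT : T.IsTree) {a b : τ} (hab : T.Adj a b) {t t' : τ}
    (ht : (T.deleteEdges {s(a, b)}).Reachable a t)
    (ht' : (T.deleteEdges {s(a, b)}).Reachable b t')
    (w : T.Walk t t') : s(a, b) ∈ w.edges := by
  by_contra h
  have hw : ∀ e ∈ w.edges, e ∉ ({s(a, b)} : Set (Sym2 τ)) := by
    intro e he hmem
    rw [Set.mem_singleton_iff] at hmem
    exact h (hmem ▸ he)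
  have : (T.deleteEdges {s(a, b)}).Reachable t t' := ⟨w.toDeleteEdges _ hw⟩
  exact bridge_not_reach hT hab (ht.trans (this.trans ht'.symm))

/-- The unique path between two vertices in the same component of `T - e` avoids `e`. -/
lemma path_avoids (hT : T.IsTree) {t t' : τ} (p : T.Walk t t') (hp : p.IsPath)
    {e : Sym2 τ} (h : (T.deleteEdges {e}).Reachable t t') : e ∉ p.edges := by
  classical
  obtain ⟨w⟩ := h
  have hsub : ∀ f ∈ w.edges, f ∈ T.edgeSet := by
    intro f hf
    have := w.edges_subset_edgeSet hf
    rw [edgeSet_deleteEdges] at this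
    exact this.1
  have hne : ∀ f ∈ w.edges, f ≠ e := by
    intro f hf
    have := w.edges_subset_edgeSet hf
    rw [edgeSet_deleteEdges] at this
    simpa using this.2
  set w' := w.transfer T hsub with hw'
  have hpq : p = (w'.toPath : T.Walk t t') :=
    ((hT.existsUnique_path t t').unique hp (w'.toPath.2))
  intro hmem
  rw [hpq] at hmem
  have : e ∈ w'.edges := w'.edges_toPath_subset hmem
  rw [hw', Walk.edges_transfer] at this
  exact hne e this rfl

lemma same_block_reach (hblocks : ∀ t, IsOmegaEdgeBlock G (X t)) {t : τ} {u v : V}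
    (hu : u ∈ X t) (hv : v ∈ X t) {F : Set (Sym2 V)} (hF : F.Finite) :
    (G.deleteEdges F).Reachable u v := by
  obtain ⟨x₀, hx₀⟩ := hblocks t
  rw [hx₀] at hu hv
  exact omegaEquiv_trans (omegaEquiv_symm hu) hv F hF

lemma EF_finite (hT : T.IsTree) (hblocks : ∀ t, IsOmegaEdgeBlock G (X t))
    (hinj : Function.Injective X)
    {π : V → τ} (hπ : ∀ v, X (π v) = {y | OmegaEquiv G v y})
    {F : Set (Sym2 V)} (hF : F.Finite) :
    {e : Sym2 τ | ∃ a b, e = s(a, b) ∧ T.Adj a b ∧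
      (edgesBetween G (side T X a b) (side T X b a) ∩ F).Nonempty}.Finite := by
  apply Set.Finite.subset (Set.Finite.biUnion hF (t := fun f => {e : Sym2 τ | ∃ a b,
      e = s(a, b) ∧ T.Adj a b ∧ f ∈ edgesBetween G (side T X a b) (side T X b a)}) ?_)
  · rintro e ⟨a, b, rfl, hab, f, hfe, hfF⟩
    exact Set.mem_biUnion hfF ⟨a, b, rfl, hab, hfe⟩
  · intro f _
    by_cases hne : {e : Sym2 τ | ∃ a b, e = s(a, b) ∧ T.Adj a b ∧
        f ∈ edgesBetween G (side T X a b) (side T X b a)}.Nonempty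
    · obtain ⟨e₀, a₀, b₀, he₀, hab₀, hfE₀, x, hx, y, hy, hfxy⟩ := hne
      obtain ⟨W⟩ := hT.isConnected (π x) (π y)
      apply Set.Finite.subset (List.finite_toSet W.edges)
      rintro e ⟨a, b, rfl, hab, hfE, x', hx', y', hy', hfxy'⟩
      have hy'' : y' ∈ side T X b a := hy'
      rw [hfxy] at hfxy'
      have hswap : ({s(b, a)} : Set (Sym2 τ)) = {s(a, b)} := by rw [Sym2.eq_swap]
      rcases Sym2.eq_iff.mp hfxy'.symm with ⟨h1, h2⟩ | ⟨h1, h2⟩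
      · subst h1; subst h2
        have r1 := side_elim hblocks hinj hπ hx'
        have r2 := side_elim hblocks hinj hπ hy''
        rw [Sym2.eq_swap (a := b) (b := a)] at r2
        exact tree_cross hT hab r1 r2 W
      · subst h1; subst h2
        have r1 := side_elim hblocks hinj hπ hx'
        have r2 := side_elim hblocks hinj hπ hy''
        rw [Sym2.eq_swap (a := b) (b := a)] at r2
        have := tree_cross hT hab r1 r2 W.reverse
        rw [Walk.edges_reverse, List.mem_reverse] at this
        exact this
    · rw [Set.not_nonempty_iff_eq_empty] at hne
      beta_reduce
      rw [hne]
      exact Set.finite_empty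

lemma walk_reach (hblocks : ∀ t, IsOmegaEdgeBlock G (X t))
    (hedge : ∀ t₁ t₂, T.Adj t₁ t₂ → ∃ x ∈ X t₁, ∃ y ∈ X t₂, G.Adj x y)
    {F : Set (Sym2 V)} (hF : F.Finite) :
    ∀ {t t' : τ} (w : T.Walk t t'),
      (∀ a b, T.Adj a b → s(a, b) ∈ w.edges →
        ¬ (edgesBetween G (side T X a b) (side T X b a) ∩ F).Nonempty) →
      ∀ u ∈ X t, ∀ v ∈ X t', (G.deleteEdges F).Reachable u v := by
  intro t t' w
  induction w with
  | nil =>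
      intro _ u hu v hv
      exact same_block_reach hblocks hu hv hF
  | @cons t c t' h p ih =>
      intro hw u hu v hv
      obtain ⟨x, hx, y, hy, hxy⟩ := hedge t c h
      have hxyF : s(x, y) ∉ F := by
        intro hmem
        exact hw t c h (by rw [Walk.edges_cons]; exact List.mem_cons_self)
          ⟨s(x, y), ⟨(G.mem_edgeSet).mpr hxy, x, mem_side_of_mem hx, y,
            mem_side_of_mem hy, rfl⟩, hmem⟩
      have h1 : (G.deleteEdges F).Reachable u x := same_block_reach hblocks hu hx hF
      have h2 : (G.deleteEdges F).Adj x y := deleteEdges_adj.mpr ⟨hxy, hxyF⟩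
      have h3 := ih (fun a b hab hmem =>
        hw a b hab (by rw [Walk.edges_cons]; exact List.mem_cons_of_mem _ hmem)) y hy v hv
      exact (h1.trans h2.reachable).trans h3

lemma combineF {α : Type*} [DecidableEq α] (Q : α → ℕ → ℕ → Prop) :
    ∀ s : Finset α, (∀ e ∈ s, ∃ m n, ∀ i ≥ m, ∀ j ≥ n, Q e i j) →
      ∃ m n, ∀ i ≥ m, ∀ j ≥ n, ∀ e ∈ s, Q e i j := by
  intro s
  induction s using Finset.induction_on with
  | empty => exact fun _ => ⟨0, 0, by simp⟩
  | @insert a s ha ih =>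
      intro h
      obtain ⟨m₁, n₁, h₁⟩ := h a (Finset.mem_insert_self a s)
      obtain ⟨m₂, n₂, h₂⟩ := ih (fun e he => h e (Finset.mem_insert_of_mem he))
      refine ⟨max m₁ m₂, max n₁ n₂, fun i hi j hj e he => ?_⟩
      rcases Finset.mem_insert.mp he with rfl | he
      · exact h₁ i (le_trans (le_max_left _ _) hi) j (le_trans (le_max_left _ _) hj)
      · exact h₂ i (le_trans (le_max_right _ _) hi) j (le_trans (le_max_right _ _) hj) e he

end Aux






/-- Given a tree-cut decomposition of finite adhesion into the ω-edge blocks of a connected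
graph (with adjacent parts joined by edges), any two rays that are not edge-equivalent have
tails on opposite sides of some tree edge, whose finite adhesion set separates those tails. -/
theorem edge_of_tree_separates_inequivalent_rays {V τ : Type*} (G : SimpleGraph V)
    (hG : G.Connected)
    (T : SimpleGraph τ) (hT : T.IsTree) (X : τ → Set V)
    (hblocks : ∀ t, IsOmegaEdgeBlock G (X t))
    (hinj : Function.Injective X)
    (hsurj : ∀ B : Set V, IsOmegaEdgeBlock G B → ∃ t, X t = B)
    (hadhesion : ∀ t₁ t₂, T.Adj t₁ t₂ →
      (edgesBetween G (side T X t₁ t₂) (side T X t₂ t₁)).Finite)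
    (hedge : ∀ t₁ t₂, T.Adj t₁ t₂ → ∃ x ∈ X t₁, ∃ y ∈ X t₂, G.Adj x y)
    (R R' : ℕ → V) (hR : IsRay G R) (hR' : IsRay G R')
    (hnequiv : ¬ EdgeEquivRays G R R') :
    ∃ t₁ t₂, T.Adj t₁ t₂ ∧
      (∃ m, ∀ i ≥ m, R i ∈ side T X t₁ t₂) ∧
      (∃ n, ∀ j ≥ n, R' j ∈ side T X t₂ t₁) ∧
      (∃ m n, ∀ i ≥ m, ∀ j ≥ n,
        ¬ (G.deleteEdges (edgesBetween G (side T X t₁ t₂) (side T X t₂ t₁))).Reachable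
            (R i) (R' j)) := by
  classical
  have hπex : ∀ v : V, ∃ t, X t = {y | OmegaEquiv G v y} := fun v => hsurj _ ⟨v, rfl⟩
  choose π hπ using hπex
  have hdich : ∀ a b, T.Adj a b → ∀ (W : ℕ → V), IsRay G W →
      ∃ N, (∀ i ≥ N, W i ∈ side T X a b) ∨ (∀ i ≥ N, W i ∈ side T X b a) := by
    intro a b hab W hW
    have hfin : (edgesBetween G (side T X a b) (side T X a b)ᶜ).Finite := by
      rw [← side_compl hT hblocks hinj hπ hab]
      exact hadhesion a b hab
    obtain ⟨N, hN⟩ := tail_side hfin hW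
    refine ⟨N, ?_⟩
    rcases hN with h | h
    · exact Or.inl h
    · right
      intro i hi
      rw [side_compl hT hblocks hinj hπ hab]
      exact h i hi
  have hP : ∃ t₁ t₂, T.Adj t₁ t₂ ∧ (∃ m, ∀ i ≥ m, R i ∈ side T X t₁ t₂) ∧
      (∃ n, ∀ j ≥ n, R' j ∈ side T X t₂ t₁) := by
    by_contra hnP
    apply hnequiv
    intro F hF
    have hQ : ∀ a b, T.Adj a b → ∃ m n, ∀ i ≥ m, ∀ j ≥ n,
        (T.deleteEdges {s(a, b)}).Reachable (π (R i)) (π (R' j)) := by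
      intro a b hab
      obtain ⟨N, hN⟩ := hdich a b hab R hR
      obtain ⟨N', hN'⟩ := hdich a b hab R' hR'
      rcases hN with h1 | h1 <;> rcases hN' with h2 | h2
      · exact ⟨N, N', fun i hi j hj =>
          (side_elim hblocks hinj hπ (h1 i hi)).symm.trans
            (side_elim hblocks hinj hπ (h2 j hj))⟩
      · exact absurd ⟨a, b, hab, ⟨N, h1⟩, ⟨N', h2⟩⟩ hnP
      · exact absurd ⟨b, a, hab.symm, ⟨N, h1⟩, ⟨N', h2⟩⟩ hnP
      · refine ⟨N, N', fun i hi j hj => ?_⟩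
        have r1 := side_elim hblocks hinj hπ (h1 i hi)
        have r2 := side_elim hblocks hinj hπ (h2 j hj)
        rw [Sym2.eq_swap (a := b) (b := a)] at r1 r2
        exact r1.symm.trans r2
    set EF : Set (Sym2 τ) := {e | ∃ a b, e = s(a, b) ∧ T.Adj a b ∧
        (edgesBetween G (side T X a b) (side T X b a) ∩ F).Nonempty} with hEFdef
    have hEFfin : EF.Finite := EF_finite hT hblocks hinj hπ hF
    have hQ' : ∀ e ∈ hEFfin.toFinset, ∃ m n, ∀ i ≥ m, ∀ j ≥ n,
        (T.deleteEdges {e}).Reachable (π (R i)) (π (R' j)) := by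
      intro e he
      rw [Set.Finite.mem_toFinset] at he
      obtain ⟨a, b, rfl, hab, _⟩ := he
      exact hQ a b hab
    obtain ⟨m, n, hmn⟩ := combineF
      (fun e i j => (T.deleteEdges {e}).Reachable (π (R i)) (π (R' j)))
      hEFfin.toFinset hQ'
    refine ⟨m, n, fun i hi j hj => ?_⟩
    obtain ⟨p₀⟩ := hT.isConnected (π (R i)) (π (R' j))
    have havoid : ∀ a b, T.Adj a b → s(a, b) ∈ (p₀.toPath : T.Walk (π (R i)) (π (R' j))).edges →
        ¬ (edgesBetween G (side T X a b) (side T X b a) ∩ F).Nonempty := by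
      intro a b hab hmem hne
      have heEF : s(a, b) ∈ EF := ⟨a, b, rfl, hab, hne⟩
      have hr := hmn i hi j hj s(a, b) (hEFfin.mem_toFinset.mpr heEF)
      exact path_avoids hT (p₀.toPath : T.Walk (π (R i)) (π (R' j))) p₀.toPath.2 hr hmem
    exact walk_reach hblocks hedge hF (p₀.toPath : T.Walk (π (R i)) (π (R' j))) havoid
      (R i) (mem_pi hπ (R i)) (R' j) (mem_pi hπ (R' j))
  obtain ⟨t₁, t₂, hadj, ⟨m, hm⟩, ⟨n, hn⟩⟩ := hP
  refine ⟨t₁, t₂, hadj, ⟨m, hm⟩, ⟨n, hn⟩, m, n, fun i hi j hj hreach => ?_⟩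
  have hc : side T X t₂ t₁ = (side T X t₁ t₂)ᶜ := side_compl hT hblocks hinj hπ hadj
  have hv : R' j ∉ side T X t₁ t₂ := by
    have := hn j hj
    rw [hc] at this
    exact this
  rw [hc] at hreach
  exact no_cross_reachable (hm i hi) hv hreach
end
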